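/- Let X be a random vector in {-1,1}^p whose probability mass function is strictly positive on all of {-1,1}^p. Then the covariance matrix of the vector of all nonconstant monomials (X_Λ)_{Λ ≠ 0} is positive definite (and in particular invertible, of full rank 2^p - 1). -/

import Mathlib

open MeasureTheory Matrix BigOperators

noncomputable def mono {Ω : Type*} (p : ℕ) (X : Ω → Fin p → ℝ)
    (Λ : Fin p → Bool) (ω : Ω) : ℝ :=
  ∏ j : Fin p, if Λ j then X ω j else 1

noncomputable def cov {Ω : Type*} [MeasurableSpace Ω] (ℙ : Measure Ω)
    (f g : Ω → ℝ) : ℝ :=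
  (∫ ω, f ω * g ω ∂ℙ) - (∫ ω, f ω ∂ℙ) * (∫ ω, g ω ∂ℙ)

namespace Stmt10Aux

/-- sign function -/
def sgn (b : Bool) : ℝ := if b then 1 else -1

/-- Walsh character on the Boolean cube. -/
def chi (p : ℕ) (Λ σ : Fin p → Bool) : ℝ := ∏ j, if Λ j then sgn (σ j) else 1

lemma factor_sum (a b : Bool) :
    ∑ c : Bool, (if a then sgn c else 1) * (if b then sgn c else 1)
      = if a = b then 2 else 0 := by
  cases a <;> cases b <;> simp [sgn] <;> norm_num

lemma orth (p : ℕ) (Λ Λ' : Fin p → Bool) :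
    ∑ σ : Fin p → Bool, chi p Λ σ * chi p Λ' σ = if Λ = Λ' then (2:ℝ)^p else 0 := by
  have h1 : ∀ σ : Fin p → Bool, chi p Λ σ * chi p Λ' σ =
      ∏ j, ((if Λ j then sgn (σ j) else 1) * (if Λ' j then sgn (σ j) else 1)) := by
    intro σ; rw [chi, chi, ← Finset.prod_mul_distrib]
  simp_rw [h1]
  have key := Fintype.prod_sum
    (fun (j : Fin p) (b : Bool) => (if Λ j then sgn b else 1) * (if Λ' j then sgn b else 1))
  rw [← key]
  simp_rw [factor_sum]
  by_cases h : Λ = Λ'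
  · subst h
    simp [Finset.prod_const, Finset.card_univ]
  · rw [if_neg h]
    obtain ⟨j, hj⟩ : ∃ j, Λ j ≠ Λ' j := by
      by_contra hc
      push_neg at hc
      exact h (funext hc)
    exact Finset.prod_eq_zero (Finset.mem_univ j) (if_neg hj)

lemma indep (p : ℕ) (w : (Fin p → Bool) → ℝ)
    (h : ∀ σ, ∑ Λ, w Λ * chi p Λ σ = 0) : ∀ Λ, w Λ = 0 := by
  intro Λ₀
  have h2 : ∑ σ : Fin p → Bool, (∑ Λ, w Λ * chi p Λ σ) * chi p Λ₀ σ = 0 := by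
    simp [h]
  have h3 : ∑ Λ, w Λ * ∑ σ : Fin p → Bool, chi p Λ σ * chi p Λ₀ σ = 0 := by
    calc ∑ Λ, w Λ * ∑ σ : Fin p → Bool, chi p Λ σ * chi p Λ₀ σ
        = ∑ Λ, ∑ σ : Fin p → Bool, w Λ * (chi p Λ σ * chi p Λ₀ σ) := by
          simp_rw [Finset.mul_sum]
      _ = ∑ σ : Fin p → Bool, ∑ Λ, w Λ * (chi p Λ σ * chi p Λ₀ σ) := Finset.sum_comm
      _ = ∑ σ : Fin p → Bool, (∑ Λ, w Λ * chi p Λ σ) * chi p Λ₀ σ := by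
          refine Finset.sum_congr rfl fun σ _ => ?_
          rw [Finset.sum_mul]
          refine Finset.sum_congr rfl fun Λ _ => ?_
          ring
      _ = 0 := h2
  simp_rw [orth, mul_ite, mul_zero] at h3
  rw [Finset.sum_ite_eq' Finset.univ Λ₀ (fun Λ => w Λ * 2^p)] at h3
  simp only [Finset.mem_univ, if_pos] at h3
  have hpow : (0:ℝ) < 2^p := by positivity
  nlinarith [h3]

end Stmt10Aux

open Stmt10Aux

/-- If the pmf of the random vector `X ∈ {-1,1}^p` is strictly positive on all of
`{-1,1}^p`, then the covariance matrix of the nonconstant monomials `(X_Λ)_{Λ ≠ 0}`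
is positive definite. -/
theorem stmt10 {Ω : Type*} [MeasurableSpace Ω] (ℙ : Measure Ω) [IsProbabilityMeasure ℙ]
    (p : ℕ) (X : Ω → Fin p → ℝ) (hX : Measurable X)
    (hval : ∀ ω, ∀ j, X ω j = 1 ∨ X ω j = -1)
    (hpos : ∀ x : Fin p → ℝ, (∀ j, x j = 1 ∨ x j = -1) → 0 < ℙ {ω | X ω = x}) :
    (Matrix.of fun (Λ Λ' : {Λ : Fin p → Bool // Λ ≠ fun _ => false}) =>
        cov ℙ (mono p X Λ.1) (mono p X Λ'.1)).PosDef := by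
  have hmeas : ∀ Λ : Fin p → Bool, Measurable (mono p X Λ) := by
    intro Λ
    apply Finset.measurable_prod
    intro j _
    by_cases h : Λ j
    · simpa [h, Function.comp_def] using (measurable_pi_apply j).comp hX
    · simpa [h] using measurable_const
  have hbound : ∀ (Λ : Fin p → Bool) ω, |mono p X Λ ω| ≤ 1 := by
    intro Λ ω
    rw [mono, Finset.abs_prod]
    apply Finset.prod_le_one
    · intro j _; positivity
    · intro j _
      by_cases h : Λ j
      · rcases hval ω j with h1 | h1 <;> simp [h, h1]
      · simp [h]
  have hint : ∀ Λ : Fin p → Bool, Integrable (mono p X Λ) ℙ := by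
    intro Λ
    refine (integrable_const (1:ℝ)).mono' (hmeas Λ).aestronglyMeasurable ?_
    exact Filter.Eventually.of_forall fun ω => by simpa [Real.norm_eq_abs] using hbound Λ ω
  have hint2 : ∀ Λ Λ' : Fin p → Bool,
      Integrable (fun ω => mono p X Λ ω * mono p X Λ' ω) ℙ := by
    intro Λ Λ'
    refine (integrable_const (1:ℝ)).mono' ((hmeas Λ).mul (hmeas Λ')).aestronglyMeasurable ?_
    refine Filter.Eventually.of_forall fun ω => ?_
    rw [Real.norm_eq_abs, abs_mul]
    exact mul_le_one₀ (hbound Λ ω) (abs_nonneg _) (hbound Λ' ω)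
  rw [posDef_iff_dotProduct_mulVec]
  constructor
  · -- Hermitian
    ext Λ Λ'
    simp only [conjTranspose_apply, Matrix.of_apply, star_trivial, cov]
    rw [show (∫ ω, mono p X Λ'.1 ω * mono p X Λ.1 ω ∂ℙ)
        = ∫ ω, mono p X Λ.1 ω * mono p X Λ'.1 ω ∂ℙ from
      integral_congr_ae (Filter.Eventually.of_forall fun ω => mul_comm _ _)]
    ring
  · intro x hx
    set f : Ω → ℝ :=
      fun ω => ∑ Λ : {Λ : Fin p → Bool // Λ ≠ fun _ => false}, x Λ * mono p X Λ.1 ω with hf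
    have hfint : Integrable f ℙ :=
      integrable_finset_sum _ fun Λ _ => ((hint Λ.1).const_mul _)
    have hsq : (fun ω => f ω * f ω)
        = fun ω => ∑ Λ : {Λ : Fin p → Bool // Λ ≠ fun _ => false},
            ∑ Λ' : {Λ : Fin p → Bool // Λ ≠ fun _ => false},
            (x Λ * x Λ') * (mono p X Λ.1 ω * mono p X Λ'.1 ω) := by
      funext ω
      rw [hf, Finset.sum_mul_sum]
      refine Finset.sum_congr rfl fun Λ _ => Finset.sum_congr rfl fun Λ' _ => by ring
    have hfsqint : Integrable (fun ω => f ω * f ω) ℙ := by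
      rw [hsq]
      exact integrable_finset_sum _ fun Λ _ =>
        integrable_finset_sum _ fun Λ' _ => ((hint2 Λ.1 Λ'.1).const_mul _)
    set c : ℝ := ∫ ω, f ω ∂ℙ with hc
    have hIf : c = ∑ Λ : {Λ : Fin p → Bool // Λ ≠ fun _ => false},
        x Λ * ∫ ω, mono p X Λ.1 ω ∂ℙ := by
      rw [hc, hf, integral_finset_sum _ fun Λ _ => ((hint Λ.1).const_mul _)]
      exact Finset.sum_congr rfl fun Λ _ => integral_const_mul _ _
    have hIff : (∫ ω, f ω * f ω ∂ℙ)
        = ∑ Λ : {Λ : Fin p → Bool // Λ ≠ fun _ => false},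
            ∑ Λ' : {Λ : Fin p → Bool // Λ ≠ fun _ => false},
            (x Λ * x Λ') * ∫ ω, mono p X Λ.1 ω * mono p X Λ'.1 ω ∂ℙ := by
      rw [hsq, integral_finset_sum _ fun Λ _ =>
        integrable_finset_sum _ fun Λ' _ => ((hint2 Λ.1 Λ'.1).const_mul _)]
      refine Finset.sum_congr rfl fun Λ _ => ?_
      rw [integral_finset_sum _ fun Λ' _ => ((hint2 Λ.1 Λ'.1).const_mul _)]
      exact Finset.sum_congr rfl fun Λ' _ => integral_const_mul _ _
    -- the quadratic form equals the variance
    have hquad : star x ⬝ᵥ ((Matrix.of fun (Λ Λ' : {Λ : Fin p → Bool // Λ ≠ fun _ => false}) =>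
        cov ℙ (mono p X Λ.1) (mono p X Λ'.1)) *ᵥ x)
        = (∫ ω, f ω * f ω ∂ℙ) - c * c := by
      rw [hIff, hIf, Finset.sum_mul_sum]
      simp only [Matrix.mulVec, dotProduct, Matrix.of_apply, star_trivial, cov]
      rw [← Finset.sum_sub_distrib]
      refine Finset.sum_congr rfl fun Λ _ => ?_
      rw [Finset.mul_sum, ← Finset.sum_sub_distrib]
      refine Finset.sum_congr rfl fun Λ' _ => ?_
      ring
    have hexp : (fun ω => (f ω - c) ^ 2)
        = fun ω => (f ω * f ω - (2 * c) * f ω) + c ^ 2 := by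
      funext ω; ring
    have hsubint : Integrable (fun ω => f ω * f ω - (2 * c) * f ω) ℙ := by
      exact hfsqint.sub (hfint.const_mul _)
    have hvar : (∫ ω, f ω * f ω ∂ℙ) - c * c = ∫ ω, (f ω - c) ^ 2 ∂ℙ := by
      rw [hexp, integral_add hsubint (integrable_const _),
        integral_sub hfsqint (hfint.const_mul _), integral_const_mul, integral_const]
      simp only [measure_univ, probReal_univ, ENNReal.toReal_one, smul_eq_mul, one_mul, ← hc]
      ring
    rw [hquad, hvar]
    have hnonneg : ∀ ω, 0 ≤ (f ω - c) ^ 2 := fun ω => sq_nonneg _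
    have hintsq : Integrable (fun ω => (f ω - c) ^ 2) ℙ := by
      rw [hexp]
      exact hsubint.add (integrable_const _)
    rcases lt_or_eq_of_le (integral_nonneg (f := fun ω => (f ω - c) ^ 2) hnonneg) with h | h
    · exact h
    exfalso
    have hae' : ∀ᵐ ω ∂ℙ, f ω = c := by
      have h0 := (integral_eq_zero_iff_of_nonneg hnonneg hintsq).mp h.symm
      filter_upwards [h0] with ω hω
      have := pow_eq_zero_iff (n := 2) (by norm_num) |>.mp hω
      linarith
    have hcube : ∀ σ : Fin p → Bool,
        ∑ Λ : {Λ : Fin p → Bool // Λ ≠ fun _ => false}, x Λ * chi p Λ.1 σ = c := by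
      intro σ
      set xσ : Fin p → ℝ := fun j => sgn (σ j) with hxσ
      have hxσval : ∀ j, xσ j = 1 ∨ xσ j = -1 := by
        intro j; rcases Bool.dichotomy (σ j) with h' | h' <;> simp [hxσ, sgn, h']
      have hS : 0 < ℙ {ω | X ω = xσ} := hpos xσ hxσval
      have hex : ∃ ω, X ω = xσ ∧ f ω = c := by
        by_contra hcon
        push_neg at hcon
        have hsub : {ω | X ω = xσ} ⊆ {ω | ¬ f ω = c} := fun ω hω => hcon ω hω
        have h0 : ℙ {ω | ¬ f ω = c} = 0 := hae'
        exact absurd (le_antisymm (h0 ▸ measure_mono hsub) zero_le) (ne_of_gt hS)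
      obtain ⟨ω, hω1, hω2⟩ := hex
      rw [← hω2, hf]
      refine Finset.sum_congr rfl fun Λ _ => ?_
      congr 1
      rw [mono, chi]
      refine Finset.prod_congr rfl fun j _ => ?_
      rw [hω1]
    set w : (Fin p → Bool) → ℝ :=
      fun Λ => if h' : Λ = fun _ => false then -c else x ⟨Λ, h'⟩ with hw
    have hwzero : ∀ σ, ∑ Λ, w Λ * chi p Λ σ = 0 := by
      intro σ
      have hchi0 : chi p (fun _ => false) σ = 1 := by simp [chi]
      rw [← Finset.add_sum_erase _ _ (Finset.mem_univ (fun _ => false))]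
      have hrest : ∑ Λ ∈ Finset.univ.erase (fun _ => false), w Λ * chi p Λ σ
          = ∑ Λ : {Λ : Fin p → Bool // Λ ≠ fun _ => false}, x Λ * chi p Λ.1 σ := by
        rw [Finset.sum_subtype (p := fun Λ : Fin p → Bool => Λ ≠ fun _ => false)
          (Finset.univ.erase (fun _ => false))
          (fun Λ => by simp [Finset.mem_erase])]
        refine Finset.sum_congr rfl fun Λ _ => ?_
        rw [hw]
        simp only [dif_neg Λ.2]
      rw [hrest, hcube σ, hchi0, hw]
      simp
    have hwz := indep p w hwzero
    apply hx
    funext Λ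
    have hzz := hwz Λ.1
    rw [hw] at hzz
    simp only [dif_neg Λ.2] at hzz
    simpa using hzz
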